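/- arXiv:2402.18343 — 5 statements merged into one kernel-verified Lean document; each statement's English description precedes it below -/
import Mathlib

section
/- Let f, f̃, g, g̃, h : ℂ → ℂ be entire functions with h not identically zero. Assume that for every zero λ₀ of h, with κ denoting the order (multiplicity) of the zero of h at λ₀, one has f(λ₀) ≠ 0, f̃(λ₀) ≠ 0, and the derivatives of the pointwise quotients satisfy (g/f)^{(k)}(λ₀) = (g̃/f̃)^{(k)}(λ₀) for all 0 ≤ k ≤ κ − 1. Then there exists an entire function H : ℂ → ℂ such that f(z)·g̃(z) − g(z)·f̃(z) = h(z)·H(z) for all z ∈ ℂ. -/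
/-!
Put `F = f·g̃ - g·f̃`. Near a zero `λ₀` of `h` we have `F = f·f̃·(g̃/f̃ - g/f)`, and the hypothesis on
the derivatives says that `g̃/f̃ - g/f` vanishes at `λ₀` to order at least `κ`, the order of `h`.
So `F/h` is meromorphic with nonnegative order at every point, and its meromorphic normal form is
the entire function `H`.
-/

open Filter Topology

section

variable {𝕜 : Type*} [NontriviallyNormedField 𝕜]

theorem meromorphicOrderAt_div_nonneg_of_analyticOrderAt_le {F h : 𝕜 → 𝕜} {z : 𝕜}
    (hF : AnalyticAt 𝕜 F z) (hh : AnalyticAt 𝕜 h z)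
    (hle : analyticOrderAt h z ≤ analyticOrderAt F z) :
    0 ≤ meromorphicOrderAt (F / h) z := by
  rw [meromorphicOrderAt_div hF.meromorphicAt hh.meromorphicAt, hF.meromorphicOrderAt_eq,
    hh.meromorphicOrderAt_eq]
  cases hn : analyticOrderAt h z with
  | top => simp
  | coe n =>
    cases hm : analyticOrderAt F z with
    | top => simp
    | coe m =>
      have hnm : (0 : ℤ) ≤ m - n := by
        have := ENat.natCast_le_natCast.mp (hn ▸ hm ▸ hle)
        omega
      simpa [ENat.map_natCast] using WithTop.coe_nonneg.mpr hnm

theorem AnalyticOnNhd.exists_analyticOnNhd_eq_mul_of_analyticOrderAt_le {F h : 𝕜 → 𝕜}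
    {U : Set 𝕜} (hF : AnalyticOnNhd 𝕜 F U) (hh : AnalyticOnNhd 𝕜 h U)
    (hle : ∀ z ∈ U, analyticOrderAt h z ≤ analyticOrderAt F z) :
    ∃ H : 𝕜 → 𝕜, AnalyticOnNhd 𝕜 H U ∧ ∀ z ∈ U, F z = h z * H z := by
  have hq : MeromorphicOn (F / h) U := hF.meromorphicOn.div hh.meromorphicOn
  refine ⟨toMeromorphicNFOn (F / h) U, fun z hz => ?_, fun z hz => ?_⟩
  · rw [← (meromorphicNFOn_toMeromorphicNFOn _ U hz).meromorphicOrderAt_nonneg_iff_analyticAt,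
      meromorphicOrderAt_congr (hq.toMeromorphicNFOn_eq_self_on_nhdsNE hz)]
    exact meromorphicOrderAt_div_nonneg_of_analyticOrderAt_le (hF z hz) (hh z hz) (hle z hz)
  · by_cases hz0 : h z = 0
    · rw [hz0, zero_mul]
      exact apply_eq_zero_of_analyticOrderAt_ne_zero
        (ne_bot_of_le_ne_bot ((hh z hz).analyticOrderAt_ne_zero.mpr hz0) (hle z hz))
    · rw [toMeromorphicNFOn_eq_toMeromorphicNFAt hq hz,
        toMeromorphicNFAt_eq_self.mpr ((hF z hz).div (hh z hz) hz0).meromorphicNFAt,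
        Pi.div_apply, mul_div_cancel₀ _ hz0]

variable [CharZero 𝕜]

theorem natCast_le_analyticOrderAt_sub_of_iteratedDeriv_eq {E : Type*} [NormedAddCommGroup E]
    [NormedSpace 𝕜 E] [CompleteSpace E] {p q : 𝕜 → E} {z₀ : 𝕜} {n : ℕ}
    (hp : AnalyticAt 𝕜 p z₀) (hq : AnalyticAt 𝕜 q z₀)
    (hpq : ∀ k < n, iteratedDeriv k p z₀ = iteratedDeriv k q z₀) :
    n ≤ analyticOrderAt (p - q) z₀ := by
  rw [natCast_le_analyticOrderAt_iff_iteratedDeriv_eq_zero (hp.sub hq)]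
  intro k hk
  rw [iteratedDeriv_sub hp.contDiffAt hq.contDiffAt, hpq k hk, sub_self]

theorem natCast_le_analyticOrderAt_mul_sub_mul_of_iteratedDeriv_div_eq [CompleteSpace 𝕜]
    {f f' g g' : 𝕜 → 𝕜} {z₀ : 𝕜} {n : ℕ} (hf : AnalyticAt 𝕜 f z₀) (hf' : AnalyticAt 𝕜 f' z₀)
    (hg : AnalyticAt 𝕜 g z₀) (hg' : AnalyticAt 𝕜 g' z₀) (hf0 : f z₀ ≠ 0) (hf'0 : f' z₀ ≠ 0)
    (hder : ∀ k < n, iteratedDeriv k (g / f) z₀ = iteratedDeriv k (g' / f') z₀) :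
    n ≤ analyticOrderAt (fun z => f z * g' z - g z * f' z) z₀ := by
  have hcross : (fun z => f z * g' z - g z * f' z) =ᶠ[𝓝 z₀]
      f * f' * (g' / f' - g / f) := by
    filter_upwards [hf.continuousAt.eventually_ne hf0, hf'.continuousAt.eventually_ne hf'0]
      with z hz hz'
    simp only [Pi.mul_apply, Pi.sub_apply, Pi.div_apply]
    field_simp
  rw [analyticOrderAt_congr hcross, analyticOrderAt_mul (hf.mul hf') ((hg'.div hf' hf'0).sub
    (hg.div hf hf0)), (hf.mul hf').analyticOrderAt_eq_zero.mpr (mul_ne_zero hf0 hf'0), zero_add]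
  exact natCast_le_analyticOrderAt_sub_of_iteratedDeriv_eq (hg'.div hf' hf'0) (hg.div hf hf0)
    fun k hk => (hder k hk).symm

end

/-- Let `f, f̃, g, g̃, h` be entire functions with `h` not identically zero.
Assume that for every zero `λ₀` of `h`, with `κ` the order of the zero of `h` at `λ₀`
(i.e. `h(z) = (z - λ₀)^κ u(z)` near `λ₀` with `u` analytic at `λ₀` and `u(λ₀) ≠ 0`),
one has `f(λ₀) ≠ 0`, `f̃(λ₀) ≠ 0`, and
`(g/f)^{(k)}(λ₀) = (g̃/f̃)^{(k)}(λ₀)` for all `0 ≤ k ≤ κ - 1`.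
Then there is an entire function `H` with `f·g̃ - g·f̃ = h·H`. -/
theorem statement0 (f ftil g gtil h : ℂ → ℂ)
    (hf : Differentiable ℂ f) (hftil : Differentiable ℂ ftil)
    (hg : Differentiable ℂ g) (hgtil : Differentiable ℂ gtil)
    (hh : Differentiable ℂ h) (hne : ∃ z : ℂ, h z ≠ 0)
    (hzeros : ∀ (lam0 : ℂ) (κ : ℕ) (u : ℂ → ℂ), h lam0 = 0 →
      AnalyticAt ℂ u lam0 → u lam0 ≠ 0 →
      (∀ᶠ z in 𝓝 lam0, h z = (z - lam0) ^ κ * u z) →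
      f lam0 ≠ 0 ∧ ftil lam0 ≠ 0 ∧
        ∀ k < κ, iteratedDeriv k (fun z => g z / f z) lam0 =
          iteratedDeriv k (fun z => gtil z / ftil z) lam0) :
    ∃ H : ℂ → ℂ, Differentiable ℂ H ∧
      ∀ z : ℂ, f z * gtil z - g z * ftil z = h z * H z := by
  have hfinite : ∀ z, analyticOrderAt h z ≠ ⊤ := fun z htop => by
    obtain ⟨w, hw⟩ := hne
    exact hw <| congrFun
      ((AnalyticOnNhd.analyticOrderAt_eq_top_iff_eq_zero z hh.analyticAt).1 htop) w
  have hle : ∀ z, analyticOrderAt h z ≤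
      analyticOrderAt (fun z => f z * gtil z - g z * ftil z) z := by
    intro z
    by_cases hz : h z = 0
    · obtain ⟨κ, hκ⟩ := ENat.ne_top_iff_exists.mp (hfinite z)
      obtain ⟨u, hu, hu0, hhu⟩ := (hh.analyticAt z).analyticOrderAt_eq_natCast.mp hκ.symm
      obtain ⟨hf0, hftil0, hder⟩ := hzeros z κ u hz hu hu0 (by simpa using hhu)
      rw [← hκ]
      exact natCast_le_analyticOrderAt_mul_sub_mul_of_iteratedDeriv_div_eq (hf.analyticAt z)
        (hftil.analyticAt z) (hg.analyticAt z) (hgtil.analyticAt z) hf0 hftil0 hder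
    · simp [(hh.analyticAt z).analyticOrderAt_eq_zero.mpr hz]
  obtain ⟨H, hH, hFH⟩ := AnalyticOnNhd.exists_analyticOnNhd_eq_mul_of_analyticOrderAt_le
    (U := Set.univ) (fun z _ => ((hf.mul hgtil).sub (hg.mul hftil)).analyticAt z)
    (fun z _ => hh.analyticAt z) fun z _ => hle z
  exact ⟨H, fun z => (hH z trivial).differentiableAt, fun z => hFH z trivial⟩
end

section
/- Let τ₁, τ₂ : ℝ → ℂ be twice continuously differentiable on [0,1] and let y : ℝ → ℂ be four times differentiable on [0,1]. Define the quasi-derivatives y^[1] := y', y^[2] := y'' + τ₂·y − τ₁·y', y^[3] := (y^[2])' − τ₁τ₂·y − (2τ₂ − τ₁²)·y' + τ₁·y^[2], y^[4] := (y^[3])' − τ₂²·y + τ₁τ₂·y' + τ₂·y^[2]. Then for every x ∈ [0,1], y^[4](x) = y''''(x) − (τ₁'·y')'(x) + τ₂''(x)·y(x). That is, for classical coefficients, the quasi-derivative scheme generated by the 4×4 Mirzoev–Shkalikov associated matrix with rows (0, 1, 0, 0), (−τ₂, τ₁, 1, 0), (τ₁τ₂, −τ₁² + 2τ₂, −τ₁,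 1), (τ₂², −τ₁τ₂, −τ₂, 0) realizes the fourth-order differential expression ℓ₄(y) = y'''' − (p y')' + q y with p = τ₁' and q = τ₂''. -/
open Set

/-- Derivative on the interval `[0,1]` (one-sided at the endpoints). -/
noncomputable def D (f : ℝ → ℂ) : ℝ → ℂ := derivWithin f (Set.Icc 0 1)

/-! Only the product rule is needed. In `y⁽³⁾` every term containing `τ₁` or `y''` cancels
against `τ₁·y⁽²⁾`, so `y⁽³⁾ = y''' + τ₂'·y - τ₂·y' - τ₁'·y'` on `[0,1]`. Differentiating this
reduced form and adding the remaining terms of `y⁽⁴⁾`, all products of coefficients cancel,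
leaving `y'''' - (τ₁'·y')' + τ₂''·y`. -/

section DerivOnUnitInterval

variable {f g : ℝ → ℂ} {x : ℝ}

theorem D_fun_add (hf : DifferentiableWithinAt ℝ f (Icc 0 1) x)
    (hg : DifferentiableWithinAt ℝ g (Icc 0 1) x) :
    D (fun t => f t + g t) x = D f x + D g x :=
  derivWithin_fun_add hf hg

theorem D_fun_sub (hf : DifferentiableWithinAt ℝ f (Icc 0 1) x)
    (hg : DifferentiableWithinAt ℝ g (Icc 0 1) x) :
    D (fun t => f t - g t) x = D f x - D g x :=
  derivWithin_fun_sub hf hg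

theorem D_fun_mul (hf : DifferentiableWithinAt ℝ f (Icc 0 1) x)
    (hg : DifferentiableWithinAt ℝ g (Icc 0 1) x) :
    D (fun t => f t * g t) x = D f x * g x + f x * D g x :=
  derivWithin_fun_mul hf hg

theorem D_congr_of_eqOn (h : EqOn f g (Icc 0 1)) (hx : x ∈ Icc 0 1) : D f x = D g x :=
  derivWithin_congr h (h hx)

end DerivOnUnitInterval

section QuasiDerivatives

variable {t1 t2 y : ℝ → ℂ} {x : ℝ}

theorem D_quasiDeriv_two (ht1 : DifferentiableWithinAt ℝ t1 (Icc 0 1) x)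
    (ht2 : DifferentiableWithinAt ℝ t2 (Icc 0 1) x)
    (hy : DifferentiableWithinAt ℝ y (Icc 0 1) x)
    (hy1 : DifferentiableWithinAt ℝ (D y) (Icc 0 1) x)
    (hy2 : DifferentiableWithinAt ℝ (D (D y)) (Icc 0 1) x) :
    D (fun t => D (D y) t + t2 t * y t - t1 t * D y t) x =
      D (D (D y)) x + (D t2 x * y x + t2 x * D y x) - (D t1 x * D y x + t1 x * D (D y) x) := by
  rw [D_fun_sub, D_fun_add, D_fun_mul, D_fun_mul] <;> fun_prop

theorem quasiDeriv_three_eqOn {qy2 qy3 : ℝ → ℂ}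
    (ht1 : DifferentiableOn ℝ t1 (Icc 0 1)) (ht2 : DifferentiableOn ℝ t2 (Icc 0 1))
    (hy : DifferentiableOn ℝ y (Icc 0 1)) (hy1 : DifferentiableOn ℝ (D y) (Icc 0 1))
    (hy2 : DifferentiableOn ℝ (D (D y)) (Icc 0 1))
    (hqy2 : qy2 = fun x => D (D y) x + t2 x * y x - t1 x * D y x)
    (hqy3 : qy3 = fun x => D qy2 x - t1 x * t2 x * y x
      - (2 * t2 x - (t1 x) ^ 2) * D y x + t1 x * qy2 x) :
    EqOn qy3 (fun x => D (D (D y)) x + D t2 x * y x - t2 x * D y x - D t1 x * D y x)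
      (Icc 0 1) := by
  intro x hx
  subst hqy2 hqy3
  simp only [D_quasiDeriv_two (ht1 x hx) (ht2 x hx) (hy x hx) (hy1 x hx) (hy2 x hx)]
  ring

theorem D_quasiDeriv_three_reduced (ht1' : DifferentiableWithinAt ℝ (D t1) (Icc 0 1) x)
    (ht2 : DifferentiableWithinAt ℝ t2 (Icc 0 1) x)
    (ht2' : DifferentiableWithinAt ℝ (D t2) (Icc 0 1) x)
    (hy : DifferentiableWithinAt ℝ y (Icc 0 1) x)
    (hy1 : DifferentiableWithinAt ℝ (D y) (Icc 0 1) x)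
    (hy3 : DifferentiableWithinAt ℝ (D (D (D y))) (Icc 0 1) x) :
    D (fun t => D (D (D y)) t + D t2 t * y t - t2 t * D y t - D t1 t * D y t) x =
      D (D (D (D y))) x + (D (D t2) x * y x + D t2 x * D y x)
        - (D t2 x * D y x + t2 x * D (D y) x) - D (fun t => D t1 t * D y t) x := by
  rw [D_fun_sub, D_fun_sub, D_fun_add, D_fun_mul, D_fun_mul] <;> fun_prop

end QuasiDerivatives

theorem statement5_general (t1 t2 y : ℝ → ℂ)
    (ht1 : DifferentiableOn ℝ t1 (Icc 0 1))
    (ht1' : DifferentiableOn ℝ (D t1) (Icc 0 1))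
    (ht2 : DifferentiableOn ℝ t2 (Icc 0 1))
    (ht2' : DifferentiableOn ℝ (D t2) (Icc 0 1))
    (hy : DifferentiableOn ℝ y (Icc 0 1))
    (hy1 : DifferentiableOn ℝ (D y) (Icc 0 1))
    (hy2 : DifferentiableOn ℝ (D (D y)) (Icc 0 1))
    (hy3 : DifferentiableOn ℝ (D (D (D y))) (Icc 0 1))
    (qy2 qy3 qy4 : ℝ → ℂ)
    (hqy2 : qy2 = fun x => D (D y) x + t2 x * y x - t1 x * D y x)
    (hqy3 : qy3 = fun x => D qy2 x - t1 x * t2 x * y x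
      - (2 * t2 x - (t1 x) ^ 2) * D y x + t1 x * qy2 x)
    (hqy4 : qy4 = fun x => D qy3 x - (t2 x) ^ 2 * y x + t1 x * t2 x * D y x
      + t2 x * qy2 x) :
    ∀ x ∈ Icc (0:ℝ) 1,
      qy4 x = D (D (D (D y))) x - D (fun t => D t1 t * D y t) x + D (D t2) x * y x := by
  intro x hx
  have hDqy3 := (D_congr_of_eqOn (quasiDeriv_three_eqOn ht1 ht2 hy hy1 hy2 hqy2 hqy3) hx).trans
    (D_quasiDeriv_three_reduced (ht1' x hx) (ht2 x hx) (ht2' x hx) (hy x hx) (hy1 x hx) (hy3 x hx))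
  subst hqy2 hqy4
  simp only [hDqy3]
  ring

/-- Let `τ₁, τ₂` be twice continuously differentiable on `[0,1]` and `y`
four times differentiable on `[0,1]`. Define the quasi-derivatives
`y⁽¹⁾ := y'`, `y⁽²⁾ := y'' + τ₂·y - τ₁·y'`,
`y⁽³⁾ := (y⁽²⁾)' - τ₁τ₂·y - (2τ₂ - τ₁²)·y' + τ₁·y⁽²⁾`,
`y⁽⁴⁾ := (y⁽³⁾)' - τ₂²·y + τ₁τ₂·y' + τ₂·y⁽²⁾`.
Then for every `x ∈ [0,1]`, `y⁽⁴⁾(x) = y''''(x) - (τ₁'·y')'(x) + τ₂''(x)·y(x)`,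
i.e. the quasi-derivative scheme generated by the 4×4 Mirzoev–Shkalikov associated matrix
realizes the fourth-order expression `ℓ₄(y) = y'''' - (p y')' + q y` with `p = τ₁'`,
`q = τ₂''`. -/
theorem statement5 (t1 t2 y : ℝ → ℂ)
    (ht1 : DifferentiableOn ℝ t1 (Icc 0 1))
    (ht1' : DifferentiableOn ℝ (D t1) (Icc 0 1))
    (ht1'' : ContinuousOn (D (D t1)) (Icc 0 1))
    (ht2 : DifferentiableOn ℝ t2 (Icc 0 1))
    (ht2' : DifferentiableOn ℝ (D t2) (Icc 0 1))
    (ht2'' : ContinuousOn (D (D t2)) (Icc 0 1))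
    (hy : DifferentiableOn ℝ y (Icc 0 1))
    (hy1 : DifferentiableOn ℝ (D y) (Icc 0 1))
    (hy2 : DifferentiableOn ℝ (D (D y)) (Icc 0 1))
    (hy3 : DifferentiableOn ℝ (D (D (D y))) (Icc 0 1))
    (qy2 qy3 qy4 : ℝ → ℂ)
    (hqy2 : qy2 = fun x => D (D y) x + t2 x * y x - t1 x * D y x)
    (hqy3 : qy3 = fun x => D qy2 x - t1 x * t2 x * y x
      - (2 * t2 x - (t1 x) ^ 2) * D y x + t1 x * qy2 x)
    (hqy4 : qy4 = fun x => D qy3 x - (t2 x) ^ 2 * y x + t1 x * t2 x * D y x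
      + t2 x * qy2 x) :
    ∀ x ∈ Icc (0:ℝ) 1,
      qy4 x = D (D (D (D y))) x - D (fun t => D t1 t * D y t) x + D (D t2) x * y x :=
  statement5_general t1 t2 y ht1 ht1' ht2 ht2' hy hy1 hy2 hy3 qy2 qy3 qy4 hqy2 hqy3 hqy4
end

section
/- Let p, p̃ : [0,1] → ℂ be continuous, and let F(x), F̃(x) be the 3×3 matrix functions with rows (0, 1, 0), (−p(x), 0, 1), (0, −p(x), 0) and (0, 1, 0), (−p̃(x), 0, 1), (0, −p̃(x), 0), respectively. Suppose P : [0,1] → M₃(ℂ) is continuously differentiable, P(x) is unit lower triangular (all diagonal entries equal 1 and all entries above the diagonal equal 0) for every x ∈ [0,1], P(0) = I, and P'(x) + P(x)·F̃(x) = F(x)·P(x) for all x ∈ [0,1]. Then p(x) = p̃(x) for all x ∈ [0,1], and moreover P(x) = I for all x ∈ [0,1]. -/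
open Set

private lemma deriv_zero_of_const {f : ℝ → ℂ} {d : ℂ} {x : ℝ} (hx : x ∈ Icc (0:ℝ) 1)
    (hd : HasDerivWithinAt f d (Icc 0 1) x) (c : ℂ) (hc : ∀ t ∈ Icc (0:ℝ) 1, f t = c) :
    d = 0 := by
  have h0 : HasDerivWithinAt f 0 (Icc (0:ℝ) 1) x :=
    (hasDerivWithinAt_const x _ c).congr hc (hc x hx)
  exact (uniqueDiffOn_Icc one_pos x hx).eq_deriv _ hd h0

/-- Let `p, p̃ : [0,1] → ℂ` be continuous and let `F(x), F̃(x)` be the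
3×3 matrices with rows `(0,1,0)`, `(-p(x),0,1)`, `(0,-p(x),0)` (resp. with `p̃`).
Suppose `P : [0,1] → M₃(ℂ)` is continuously differentiable on `[0,1]` (entrywise, with
derivative `P'` continuous on `[0,1]`), `P(x)` is unit lower triangular for every
`x ∈ [0,1]`, `P(0) = I`, and `P'(x) + P(x)·F̃(x) = F(x)·P(x)` on `[0,1]`. Then
`p = p̃` on `[0,1]` and moreover `P(x) = I` for all `x ∈ [0,1]`. -/
theorem statement12 (p ptil : ℝ → ℂ)
    (hp : ContinuousOn p (Icc 0 1)) (hptil : ContinuousOn ptil (Icc 0 1))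
    (P P' : ℝ → Matrix (Fin 3) (Fin 3) ℂ)
    (hPderiv : ∀ i j : Fin 3, ∀ x ∈ Icc (0:ℝ) 1,
      HasDerivWithinAt (fun t => P t i j) (P' x i j) (Icc 0 1) x)
    (hPcont : ∀ i j : Fin 3, ContinuousOn (fun x => P' x i j) (Icc 0 1))
    (hdiag : ∀ x ∈ Icc (0:ℝ) 1, ∀ i : Fin 3, P x i i = 1)
    (hupper : ∀ x ∈ Icc (0:ℝ) 1, ∀ i j : Fin 3, i < j → P x i j = 0)
    (hP0 : P 0 = 1)
    (heq : ∀ x ∈ Icc (0:ℝ) 1,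
      P' x + P x * !![0, 1, 0; -ptil x, 0, 1; 0, -ptil x, 0]
        = !![0, 1, 0; -p x, 0, 1; 0, -p x, 0] * P x) :
    (∀ x ∈ Icc (0:ℝ) 1, p x = ptil x) ∧ (∀ x ∈ Icc (0:ℝ) 1, P x = 1) := by
  -- entrywise form of the equation
  have hent : ∀ x ∈ Icc (0:ℝ) 1, ∀ i j : Fin 3,
      P' x i j + (P x * !![0, 1, 0; -ptil x, 0, 1; 0, -ptil x, 0]) i j
        = (!![0, 1, 0; -p x, 0, 1; 0, -p x, 0] * P x) i j := by
    intro x hx i j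
    have := congrFun (congrFun (heq x hx) i) j
    simpa using this
  -- a(x) = P x 1 0 = 0
  have ha : ∀ x ∈ Icc (0:ℝ) 1, P x 1 0 = 0 := by
    intro x hx
    have h00 := hent x hx 0 0
    have hd : P' x 0 0 = 0 :=
      deriv_zero_of_const hx (hPderiv 0 0 x hx) 1 (fun t ht => hdiag t ht 0)
    simp [Matrix.mul_apply, Fin.sum_univ_three, hd,
      hupper x hx 0 1 (by decide)] at h00
    exact h00.symm
  -- c(x) = P x 2 1 = 0
  have hc : ∀ x ∈ Icc (0:ℝ) 1, P x 2 1 = 0 := by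
    intro x hx
    have h11 := hent x hx 1 1
    have hd : P' x 1 1 = 0 :=
      deriv_zero_of_const hx (hPderiv 1 1 x hx) 1 (fun t ht => hdiag t ht 1)
    simp [Matrix.mul_apply, Fin.sum_univ_three, hd, ha x hx,
      hdiag x hx, hupper x hx 0 1 (by decide), hupper x hx 1 2 (by decide)] at h11
    exact h11.symm
  -- key entry equations
  have hb1 : ∀ x ∈ Icc (0:ℝ) 1, P x 2 0 = p x - ptil x := by
    intro x hx
    have h10 := hent x hx 1 0
    have hd : P' x 1 0 = 0 :=
      deriv_zero_of_const hx (hPderiv 1 0 x hx) 0 ha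
    simp [Matrix.mul_apply, Fin.sum_univ_three, hd, hdiag x hx] at h10
    linear_combination -h10
  have hb2 : ∀ x ∈ Icc (0:ℝ) 1, P x 2 0 = ptil x - p x := by
    intro x hx
    have h21 := hent x hx 2 1
    have hd : P' x 2 1 = 0 :=
      deriv_zero_of_const hx (hPderiv 2 1 x hx) 0 hc
    simp [Matrix.mul_apply, Fin.sum_univ_three, hd, hdiag x hx,
      hupper x hx 0 1 (by decide)] at h21
    linear_combination h21
  have hpq : ∀ x ∈ Icc (0:ℝ) 1, p x = ptil x := by
    intro x hx
    have := (hb1 x hx).symm.trans (hb2 x hx)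
    linear_combination this / 2
  refine ⟨hpq, fun x hx => ?_⟩
  have hb0 : P x 2 0 = 0 := by
    have := hb1 x hx
    rw [hpq x hx] at this
    simpa using this
  ext i j
  fin_cases i <;> fin_cases j <;>
    simp [hdiag x hx, hupper x hx, ha x hx, hc x hx, hb0,
      hupper x hx 0 1 (by decide), hupper x hx 0 2 (by decide),
      hupper x hx 1 2 (by decide), Matrix.one_apply]
end

section
/- Let τ₁, τ̃₁, τ₂, τ̃₂ : [0,1] → ℂ be continuous, and let F(x), F̃(x) be the 4×4 matrix functions with rows (0, 1, 0, 0), (−τ₂, τ₁, 1, 0), (τ₁τ₂, −τ₁² + 2τ₂, −τ₁, 1), (τ₂², −τ₁τ₂, −τ₂, 0), built from (τ₁, τ₂) and (τ̃₁, τ̃₂), respectively. Suppose P : [0,1] → M₄(ℂ) is continuously differentiable, P(x) is unit lower triangular (diagonal entries 1, entries above the diagonal 0) for every x ∈ [0,1], P(0) = I, and P'(x) + P(x)·F̃(x) = F(x)·P(x) for all x ∈ [0,1]. Then τ̃₁(x) = τ₁(x) for all x ∈ [0,1], and there exists a constant c ∈ ℂ such that τ̃₂(x) = τ₂(x) + c·x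 for all x ∈ [0,1]. -/
open Set

/-- The 4×4 Mirzoev–Shkalikov associated matrix built from `τ₁, τ₂` at the point `x`. -/
noncomputable def F4 (t1 t2 : ℝ → ℂ) (x : ℝ) : Matrix (Fin 4) (Fin 4) ℂ :=
  !![0, 1, 0, 0;
     -t2 x, t1 x, 1, 0;
     t1 x * t2 x, -(t1 x) ^ 2 + 2 * t2 x, -t1 x, 1;
     (t2 x) ^ 2, -(t1 x * t2 x), -t2 x, 0]

/-- If a function has the given derivative within `Icc 0 1` and is constant there,
the given derivative vanishes on `Icc 0 1`. -/
lemma aux_deriv_zero {g g' : ℝ → ℂ}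
    (hg : ∀ x ∈ Icc (0:ℝ) 1, HasDerivWithinAt g (g' x) (Icc 0 1) x)
    (k : ℂ) (hc : ∀ x ∈ Icc (0:ℝ) 1, g x = k) :
    ∀ x ∈ Icc (0:ℝ) 1, g' x = 0 := by
  intro x hx
  have h2 : HasDerivWithinAt g 0 (Icc 0 1) x :=
    (hasDerivWithinAt_const x _ k).congr (fun y hy => hc y hy) (hc x hx)
  have hu := (uniqueDiffOn_Icc (zero_lt_one)) x hx
  rw [← (hg x hx).derivWithin hu, h2.derivWithin hu]

/-- If a function has vanishing derivative within `Icc 0 1` and vanishes at `0`,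
it vanishes on `Icc 0 1`. -/
lemma aux_const_zero {g g' : ℝ → ℂ}
    (hg : ∀ x ∈ Icc (0:ℝ) 1, HasDerivWithinAt g (g' x) (Icc 0 1) x)
    (h0 : ∀ x ∈ Icc (0:ℝ) 1, g' x = 0) (hg0 : g 0 = 0) :
    ∀ x ∈ Icc (0:ℝ) 1, g x = 0 := by
  intro x hx
  have hconst := constant_of_derivWithin_zero (f := g) (a := (0:ℝ)) (b := 1)
    (fun y hy => (hg y hy).differentiableWithinAt)
    (fun y hy => by
      rw [(hg y (Ico_subset_Icc_self hy)).derivWithin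
        ((uniqueDiffOn_Icc zero_lt_one) y (Ico_subset_Icc_self hy))]
      exact h0 y (Ico_subset_Icc_self hy))
  rw [hconst x hx, hg0]

/-- Let `τ₁, τ̃₁, τ₂, τ̃₂ : [0,1] → ℂ` be continuous and let
`F(x), F̃(x)` be the 4×4 Mirzoev–Shkalikov matrices built from `(τ₁, τ₂)` and
`(τ̃₁, τ̃₂)` respectively. Suppose `P : [0,1] → M₄(ℂ)` is continuously differentiable on
`[0,1]` (entrywise, with derivative `P'` continuous on `[0,1]`), `P(x)` is unit lower
triangular on `[0,1]`, `P(0) = I`, and `P'(x) + P(x)·F̃(x) = F(x)·P(x)` on `[0,1]`.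
Then `τ̃₁ = τ₁` on `[0,1]` and there is a constant `c ∈ ℂ` with `τ̃₂(x) = τ₂(x) + c·x`
on `[0,1]`. -/
theorem statement13 (t1 t1til t2 t2til : ℝ → ℂ)
    (ht1 : ContinuousOn t1 (Icc 0 1)) (ht1til : ContinuousOn t1til (Icc 0 1))
    (ht2 : ContinuousOn t2 (Icc 0 1)) (ht2til : ContinuousOn t2til (Icc 0 1))
    (P P' : ℝ → Matrix (Fin 4) (Fin 4) ℂ)
    (hPderiv : ∀ i j : Fin 4, ∀ x ∈ Icc (0:ℝ) 1,
      HasDerivWithinAt (fun t => P t i j) (P' x i j) (Icc 0 1) x)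
    (hPcont : ∀ i j : Fin 4, ContinuousOn (fun x => P' x i j) (Icc 0 1))
    (hdiag : ∀ x ∈ Icc (0:ℝ) 1, ∀ i : Fin 4, P x i i = 1)
    (hupper : ∀ x ∈ Icc (0:ℝ) 1, ∀ i j : Fin 4, i < j → P x i j = 0)
    (hP0 : P 0 = 1)
    (heq : ∀ x ∈ Icc (0:ℝ) 1,
      P' x + P x * F4 t1til t2til x = F4 t1 t2 x * P x) :
    (∀ x ∈ Icc (0:ℝ) 1, t1til x = t1 x) ∧
    (∃ c : ℂ, ∀ x ∈ Icc (0:ℝ) 1, t2til x = t2 x + c * x) := by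
  -- derivatives of diagonal entries vanish
  have hdZ : ∀ i : Fin 4, ∀ x ∈ Icc (0:ℝ) 1, P' x i i = 0 :=
    fun i => aux_deriv_zero (hPderiv i i) 1 (fun x hx => hdiag x hx i)
  -- if an entry vanishes identically, so does its derivative
  have hd' : ∀ (i j : Fin 4), (∀ x ∈ Icc (0:ℝ) 1, P x i j = 0) →
      ∀ x ∈ Icc (0:ℝ) 1, P' x i j = 0 :=
    fun i j h => aux_deriv_zero (hPderiv i j) 0 h
  -- Step 1: entry (0,0) gives P x 1 0 = 0
  have ha : ∀ x ∈ Icc (0:ℝ) 1, P x 1 0 = 0 := by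
    intro x hx
    have h := congrFun (congrFun (heq x hx) 0) 0
    simp [Matrix.add_apply, Matrix.mul_apply, Fin.sum_univ_four, F4] at h
    rw [hupper x hx 0 1 (by decide), hupper x hx 0 2 (by decide),
      hupper x hx 0 3 (by decide), hdZ 0 x hx] at h
    linear_combination -h
  have ha' := hd' 1 0 ha
  -- Step 2: entry (1,0) gives P x 2 0 = t2 - t2til
  have hb : ∀ x ∈ Icc (0:ℝ) 1, P x 2 0 = t2 x - t2til x := by
    intro x hx
    have h := congrFun (congrFun (heq x hx) 1) 0
    simp [Matrix.add_apply, Matrix.mul_apply, Fin.sum_univ_four, F4] at h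
    rw [hdiag x hx 1, hupper x hx 1 2 (by decide), hupper x hx 1 3 (by decide),
      hdiag x hx 0, ha x hx, ha' x hx] at h
    linear_combination -h
  -- Step 3: entry (1,1) gives P x 2 1 = t1til - t1
  have hc : ∀ x ∈ Icc (0:ℝ) 1, P x 2 1 = t1til x - t1 x := by
    intro x hx
    have h := congrFun (congrFun (heq x hx) 1) 1
    simp [Matrix.add_apply, Matrix.mul_apply, Fin.sum_univ_four, F4] at h
    rw [hdiag x hx 1, hupper x hx 1 2 (by decide), hupper x hx 1 3 (by decide),
      hupper x hx 0 1 (by decide), ha x hx, hdZ 1 x hx] at h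
    linear_combination -h
  -- Step 4: entry (2,2) gives P x 3 2 = 0
  have hf : ∀ x ∈ Icc (0:ℝ) 1, P x 3 2 = 0 := by
    intro x hx
    have h := congrFun (congrFun (heq x hx) 2) 2
    simp [Matrix.add_apply, Matrix.mul_apply, Fin.sum_univ_four, F4] at h
    rw [hdiag x hx 2, hupper x hx 2 3 (by decide), hupper x hx 0 2 (by decide),
      hupper x hx 1 2 (by decide), hdZ 2 x hx, hc x hx] at h
    linear_combination -h
  have hf' := hd' 3 2 hf
  -- Step 5: entry (3,2) gives P x 3 1 = t2til - t2
  have he : ∀ x ∈ Icc (0:ℝ) 1, P x 3 1 = t2til x - t2 x := by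
    intro x hx
    have h := congrFun (congrFun (heq x hx) 3) 2
    simp [Matrix.add_apply, Matrix.mul_apply, Fin.sum_univ_four, F4] at h
    rw [hdiag x hx 3, hupper x hx 0 2 (by decide), hupper x hx 1 2 (by decide),
      hdiag x hx 2, hf x hx, hf' x hx] at h
    linear_combination h
  -- Step 6: entry (2,1) gives P' x 2 1 = 0
  have hc' : ∀ x ∈ Icc (0:ℝ) 1, P' x 2 1 = 0 := by
    intro x hx
    have h := congrFun (congrFun (heq x hx) 2) 1
    simp [Matrix.add_apply, Matrix.mul_apply, Fin.sum_univ_four, F4] at h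
    rw [hdiag x hx 2, hupper x hx 2 3 (by decide), hupper x hx 0 1 (by decide),
      hdiag x hx 1, hb x hx, hc x hx, he x hx] at h
    linear_combination h
  -- P x 2 1 vanishes identically, hence t1til = t1
  have hcz : ∀ x ∈ Icc (0:ℝ) 1, P x 2 1 = 0 := by
    refine aux_const_zero (hPderiv 2 1) hc' ?_
    simp [hP0, Matrix.one_apply]
  have h1 : ∀ x ∈ Icc (0:ℝ) 1, t1til x = t1 x := by
    intro x hx
    have := hc x hx
    rw [hcz x hx] at this
    linear_combination -this
  -- Step 7: entry (3,0) gives P' x 3 0 = 0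
  have hd0 : ∀ x ∈ Icc (0:ℝ) 1, P' x 3 0 = 0 := by
    intro x hx
    have h := congrFun (congrFun (heq x hx) 3) 0
    simp [Matrix.add_apply, Matrix.mul_apply, Fin.sum_univ_four, F4] at h
    rw [hdiag x hx 3, hdiag x hx 0, ha x hx, hf x hx, he x hx, hb x hx] at h
    linear_combination h
  have hdz : ∀ x ∈ Icc (0:ℝ) 1, P x 3 0 = 0 := by
    refine aux_const_zero (hPderiv 3 0) hd0 ?_
    simp [hP0, Matrix.one_apply]
  -- Step 8: entry (2,0) gives P' x 2 0 = 0
  have hb0 : ∀ x ∈ Icc (0:ℝ) 1, P' x 2 0 = 0 := by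
    intro x hx
    have h := congrFun (congrFun (heq x hx) 2) 0
    simp [Matrix.add_apply, Matrix.mul_apply, Fin.sum_univ_four, F4] at h
    rw [hdiag x hx 2, hupper x hx 2 3 (by decide), hdiag x hx 0, ha x hx,
      hcz x hx, hdz x hx, hb x hx, h1 x hx] at h
    linear_combination h
  have hbz : ∀ x ∈ Icc (0:ℝ) 1, P x 2 0 = 0 := by
    refine aux_const_zero (hPderiv 2 0) hb0 ?_
    simp [hP0, Matrix.one_apply]
  refine ⟨h1, 0, fun x hx => ?_⟩
  have := hb x hx
  rw [hbz x hx] at this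
  linear_combination this
end

section
/- Let σ₀, σ̃₀, σ₁, σ̃₁ : [0,1] → ℂ be continuous, and let F(x), F̃(x) be the 5×5 matrix functions with rows (0,1,0,0,0), (0,0,1,0,0), (σ₁, −σ₀, 0, 1, 0), (0, 0, −σ₀, 0, 1), (0, 0, −σ₁, 0, 0), built from (σ₀, σ₁) and (σ̃₀, σ̃₁), respectively. Suppose P : [0,1] → M₅(ℂ) is continuously differentiable, P(x) is unit lower triangular (diagonal entries 1, entries above the diagonal 0) for every x ∈ [0,1], P(0) = I, and P'(x) + P(x)·F̃(x) = F(x)·P(x) for all x ∈ [0,1]. Then σ̃₀(x) = σ₀(x) and σ̃₁(x) = σ₁(x) for all x ∈ [0,1]. -/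
open Set

/-- The 5×5 associated matrix built from `σ₀, σ₁` at the point `x`. -/
noncomputable def F5 (s0 s1 : ℝ → ℂ) (x : ℝ) : Matrix (Fin 5) (Fin 5) ℂ :=
  !![0, 1, 0, 0, 0;
     0, 0, 1, 0, 0;
     s1 x, -s0 x, 0, 1, 0;
     0, 0, -s0 x, 0, 1;
     0, 0, -s1 x, 0, 0]

/-- Let `σ₀, σ̃₀, σ₁, σ̃₁ : [0,1] → ℂ` be continuous and let
`F(x), F̃(x)` be the 5×5 associated matrices built from `(σ₀, σ₁)` and `(σ̃₀, σ̃₁)`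
respectively. Suppose `P : [0,1] → M₅(ℂ)` is continuously differentiable on `[0,1]`
(entrywise, with derivative `P'` continuous on `[0,1]`), `P(x)` is unit lower triangular
on `[0,1]`, `P(0) = I`, and `P'(x) + P(x)·F̃(x) = F(x)·P(x)` on `[0,1]`. Then
`σ̃₀ = σ₀` and `σ̃₁ = σ₁` on `[0,1]`. -/
theorem statement14 (s0 s0til s1 s1til : ℝ → ℂ)
    (hs0 : ContinuousOn s0 (Icc 0 1)) (hs0til : ContinuousOn s0til (Icc 0 1))
    (hs1 : ContinuousOn s1 (Icc 0 1)) (hs1til : ContinuousOn s1til (Icc 0 1))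
    (P P' : ℝ → Matrix (Fin 5) (Fin 5) ℂ)
    (hPderiv : ∀ i j : Fin 5, ∀ x ∈ Icc (0:ℝ) 1,
      HasDerivWithinAt (fun t => P t i j) (P' x i j) (Icc 0 1) x)
    (hPcont : ∀ i j : Fin 5, ContinuousOn (fun x => P' x i j) (Icc 0 1))
    (hdiag : ∀ x ∈ Icc (0:ℝ) 1, ∀ i : Fin 5, P x i i = 1)
    (hupper : ∀ x ∈ Icc (0:ℝ) 1, ∀ i j : Fin 5, i < j → P x i j = 0)
    (hP0 : P 0 = 1)
    (heq : ∀ x ∈ Icc (0:ℝ) 1,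
      P' x + P x * F5 s0til s1til x = F5 s0 s1 x * P x) :
    (∀ x ∈ Icc (0:ℝ) 1, s0til x = s0 x) ∧ (∀ x ∈ Icc (0:ℝ) 1, s1til x = s1 x) := by
  have hI : UniqueDiffOn ℝ (Icc (0:ℝ) 1) := uniqueDiffOn_Icc zero_lt_one
  -- an entry that is constant on `Icc 0 1` has zero derivative there
  have hzero : ∀ (i j : Fin 5) (c : ℂ), (∀ x ∈ Icc (0:ℝ) 1, P x i j = c) →
      ∀ x ∈ Icc (0:ℝ) 1, P' x i j = 0 := by
    intro i j c hc x hx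
    have h1 : HasDerivWithinAt (fun t => P t i j) 0 (Icc 0 1) x :=
      (hasDerivWithinAt_const x _ c).congr hc (hc x hx)
    have h2 := (hPderiv i j x hx).derivWithin (hI x hx)
    rw [← h2, h1.derivWithin (hI x hx)]
  -- an entry with zero derivative on `Icc 0 1` is constant there
  have hconst : ∀ (i j : Fin 5), (∀ x ∈ Icc (0:ℝ) 1, P' x i j = 0) →
      ∀ x ∈ Icc (0:ℝ) 1, P x i j = P 0 i j := by
    intro i j h x hx
    have h0 : (0:ℝ) ∈ Icc (0:ℝ) 1 := by norm_num
    have hb := (convex_Icc (0:ℝ) 1).norm_image_sub_le_of_norm_hasDerivWithin_le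
      (f := fun t => P t i j) (f' := fun t => P' t i j) (C := 0)
      (fun t ht => hPderiv i j t ht) (fun t ht => by simp [h t ht]) h0 hx
    have : ‖P x i j - P 0 i j‖ ≤ 0 := by simpa using hb
    have := norm_le_zero_iff.mp this
    exact sub_eq_zero.mp this
  -- the entrywise form of the matrix equation
  have hE : ∀ x ∈ Icc (0:ℝ) 1, ∀ i j : Fin 5,
      P' x i j + (P x * F5 s0til s1til x) i j = (F5 s0 s1 x * P x) i j := by
    intro x hx i j
    have := congrFun (congrFun (heq x hx) i) j
    simpa [Matrix.add_apply] using this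
  -- step 1 : P x 1 0 = 0
  have h10 : ∀ x ∈ Icc (0:ℝ) 1, P x 1 0 = 0 := by
    intro x hx
    have e := hE x hx 0 0
    have d := hzero 0 0 1 (fun t ht => hdiag t ht 0) x hx
    simp [F5, Matrix.mul_apply, Fin.sum_univ_five, Matrix.vecHead, Matrix.vecTail,
      d, hupper x hx 0 2 (by decide)] at e
    exact e.symm
  -- step 2 : P x 2 1 = 0
  have h21 : ∀ x ∈ Icc (0:ℝ) 1, P x 2 1 = 0 := by
    intro x hx
    have e := hE x hx 1 1
    have d := hzero 1 1 1 (fun t ht => hdiag t ht 1) x hx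
    simp [F5, Matrix.mul_apply, Fin.sum_univ_five, Matrix.vecHead, Matrix.vecTail,
      d, h10 x hx, hupper x hx 1 2 (by decide)] at e
    exact e.symm
  -- step 3 : P x 3 2 = 0
  have h32 : ∀ x ∈ Icc (0:ℝ) 1, P x 3 2 = 0 := by
    intro x hx
    have e := hE x hx 2 2
    have d := hzero 2 2 1 (fun t ht => hdiag t ht 2) x hx
    simp [F5, Matrix.mul_apply, Fin.sum_univ_five, Matrix.vecHead, Matrix.vecTail,
      d, h21 x hx, hupper x hx 2 3 (by decide), hupper x hx 2 4 (by decide),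
      hupper x hx 0 2 (by decide), hupper x hx 1 2 (by decide)] at e
    exact e.symm
  -- step 4 : P x 4 3 = 0
  have h43 : ∀ x ∈ Icc (0:ℝ) 1, P x 4 3 = 0 := by
    intro x hx
    have e := hE x hx 3 3
    have d := hzero 3 3 1 (fun t ht => hdiag t ht 3) x hx
    simp [F5, Matrix.mul_apply, Fin.sum_univ_five, Matrix.vecHead, Matrix.vecTail,
      d, h32 x hx, hupper x hx 2 3 (by decide)] at e
    exact e.symm
  -- step 5 : P x 2 0 = 0
  have h20 : ∀ x ∈ Icc (0:ℝ) 1, P x 2 0 = 0 := by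
    intro x hx
    have e := hE x hx 1 0
    have d := hzero 1 0 0 h10 x hx
    simp [F5, Matrix.mul_apply, Fin.sum_univ_five, Matrix.vecHead, Matrix.vecTail,
      d, hupper x hx 1 2 (by decide)] at e
    exact e.symm
  -- step 6 : P x 3 1 = s0 x - s0til x
  have h31 : ∀ x ∈ Icc (0:ℝ) 1, P x 3 1 = s0 x - s0til x := by
    intro x hx
    have e := hE x hx 2 1
    have d := hzero 2 1 0 h21 x hx
    simp [F5, Matrix.mul_apply, Fin.sum_univ_five, Matrix.vecHead, Matrix.vecTail,
      d, h20 x hx, hdiag x hx 2, hdiag x hx 1, hupper x hx 0 1 (by decide),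
      hupper x hx 2 4 (by decide)] at e
    linear_combination -e
  -- step 7 : P x 4 2 = P x 3 1 + s0 x - s0til x
  have h42 : ∀ x ∈ Icc (0:ℝ) 1, P x 4 2 = P x 3 1 + (s0 x - s0til x) := by
    intro x hx
    have e := hE x hx 3 2
    have d := hzero 3 2 0 h32 x hx
    simp [F5, Matrix.mul_apply, Fin.sum_univ_five, Matrix.vecHead, Matrix.vecTail,
      d, hdiag x hx 3, hdiag x hx 2, hupper x hx 3 4 (by decide)] at e
    linear_combination -e
  -- step 8 : P x 4 2 = 0
  have h42z : ∀ x ∈ Icc (0:ℝ) 1, P x 4 2 = 0 := by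
    intro x hx
    have e := hE x hx 4 3
    have d := hzero 4 3 0 h43 x hx
    simp [F5, Matrix.mul_apply, Fin.sum_univ_five, Matrix.vecHead, Matrix.vecTail,
      d, hupper x hx 2 3 (by decide)] at e
    exact e
  -- conclusion for s0
  have hS0 : ∀ x ∈ Icc (0:ℝ) 1, s0til x = s0 x := by
    intro x hx
    have := (h42z x hx) ▸ (h42 x hx)
    have h' := h31 x hx
    rw [h'] at this
    linear_combination this / 2
  -- hence P x 3 1 = 0 everywhere
  have h31z : ∀ x ∈ Icc (0:ℝ) 1, P x 3 1 = 0 := by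
    intro x hx
    rw [h31 x hx, hS0 x hx, sub_self]
  -- step 9 : P x 4 1 = s1til x - s1 x   (from entry (4,2))
  have h41 : ∀ x ∈ Icc (0:ℝ) 1, P x 4 1 = s1til x - s1 x := by
    intro x hx
    have e := hE x hx 4 2
    have d := hzero 4 2 0 h42z x hx
    simp [F5, Matrix.mul_apply, Fin.sum_univ_five, Matrix.vecHead, Matrix.vecTail,
      d, h43 x hx, hdiag x hx 4, hdiag x hx 2] at e
    linear_combination e
  -- step 10 : P' x 4 0 = 0, hence P x 4 0 = 0
  have h40d : ∀ x ∈ Icc (0:ℝ) 1, P' x 4 0 = 0 := by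
    intro x hx
    have e := hE x hx 4 0
    simp [F5, Matrix.mul_apply, Fin.sum_univ_five, Matrix.vecHead, Matrix.vecTail,
      h42z x hx, h20 x hx] at e
    exact e
  have h40 : ∀ x ∈ Icc (0:ℝ) 1, P x 4 0 = 0 := by
    intro x hx
    have := hconst 4 0 h40d x hx
    rw [this, hP0]
    simp [Matrix.one_apply]
  -- step 11 : P' x 4 1 = 0, hence P x 4 1 = 0
  have h41d : ∀ x ∈ Icc (0:ℝ) 1, P' x 4 1 = 0 := by
    intro x hx
    have e := hE x hx 4 1
    simp [F5, Matrix.mul_apply, Fin.sum_univ_five, Matrix.vecHead, Matrix.vecTail,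
      h42z x hx, h40 x hx, h21 x hx] at e
    exact e
  have h41z : ∀ x ∈ Icc (0:ℝ) 1, P x 4 1 = 0 := by
    intro x hx
    have := hconst 4 1 h41d x hx
    rw [this, hP0]
    simp [Matrix.one_apply]
  -- conclusion for s1
  refine ⟨hS0, fun x hx => ?_⟩
  have := h41 x hx
  rw [h41z x hx] at this
  linear_combination -this
end
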